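/- arXiv:1102.4768 — 7 statements merged into one kernel-verified Lean document; each statement's English description precedes it below -/
import Mathlib

section
/- Let V = ℝ^7 with standard basis e_1,…,e_7 and dual basis f_1,…,f_7, and let T be the alternating trilinear form with trivector t = f_{124} + f_{235} + f_{346} + f_{457} + f_{561} + f_{672} + f_{713} (where f_{ijk} = f_i ∧ f_j ∧ f_k). Then T has no singular lines: for any linearly independent a, b ∈ ℝ^7 there exists x with T(a,b,x) ≠ 0. -/
/-!
Writing `a × b` for the seven-dimensional cross product attached to the Fano plane, the form is
`T(a, b, x) = ⟨a × b, x⟩`, so `a, b` span a singular line exactly when `a × b = 0`. The identity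
`b × (a × b) = |b|² a - ⟨a, b⟩ b` then gives `|b|² a = ⟨a, b⟩ b`, which for independent `a, b`
forces `|b|² = 0`, i.e. `b = 0`.
-/

open Matrix

theorem AlternatingMap.ext_of_basis_strictMono {R M N ι : Type*} [CommSemiring R]
    [AddCommMonoid M] [AddCommGroup N] [Module R M] [Module R N] [LinearOrder ι] {n : ℕ}
    {f g : M [⋀^Fin n]→ₗ[R] N} (e : Module.Basis ι R M)
    (h : ∀ v : Fin n → ι, StrictMono v → f (e ∘ v) = g (e ∘ v)) : f = g := by
  refine e.ext_alternating fun v hv => ?_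
  set σ := Tuple.sort v
  have hsorted : StrictMono (v ∘ σ) :=
    (Tuple.monotone_sort v).strictMono_of_injective (hv.comp σ.injective)
  have hv' : (fun i => e (v i)) = (e ∘ v ∘ σ) ∘ σ.symm := by
    ext1 i; simp
  rw [hv', f.map_perm, g.map_perm, h _ hsorted]

/-- `f_i ∧ f_j ∧ f_k`, i.e. the `3 × 3` minor in the coordinates `i, j, k`. -/
noncomputable def coordWedge (i j k : Fin 7) : AlternatingMap ℝ (Fin 7 → ℝ) ℝ (Fin 3) :=
  Matrix.detRowAlternating.compLinearMap (LinearMap.funLeft ℝ ℝ ![i, j, k])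

theorem coordWedge_apply (i j k : Fin 7) (u v w : Fin 7 → ℝ) :
    coordWedge i j k ![u, v, w] =
      u i * (v j * w k - v k * w j) - u j * (v i * w k - v k * w i)
        + u k * (v i * w j - v j * w i) := by
  change Matrix.det (Matrix.of fun s t => ![u, v, w] s (![i, j, k] t)) = _
  rw [Matrix.det_fin_three]
  simp only [of_apply, cons_val]
  ring

noncomputable def fanoForm : AlternatingMap ℝ (Fin 7 → ℝ) ℝ (Fin 3) :=
  ∑ m : Fin 7, coordWedge m (m + 1) (m + 3)

/-- The lines of the Fano plane through `m` are `{m, m + k, m + 3k}` for `k ∈ {1, 2, 4}`. -/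
def fanoCross (a b : Fin 7 → ℝ) : Fin 7 → ℝ := fun m =>
  ∑ k ∈ ({1, 2, 4} : Finset (Fin 7)), (a (m + k) * b (m + 3 * k) - a (m + 3 * k) * b (m + k))

theorem fanoForm_apply (a b x : Fin 7 → ℝ) : fanoForm ![a, b, x] = fanoCross a b ⬝ᵥ x := by
  simp [fanoForm, coordWedge_apply, fanoCross, dotProduct, Fin.sum_univ_seven]
  ring

theorem fanoForm_single (i j k : Fin 7) (hij : i < j) (hjk : j < k) :
    fanoForm ![Pi.single i 1, Pi.single j 1, Pi.single k 1] =
      if ((i : ℕ), (j : ℕ), (k : ℕ)) ∈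
          [((0:ℕ), (1:ℕ), (3:ℕ)), (1, 2, 4), (2, 3, 5), (3, 4, 6),
            (0, 4, 5), (1, 5, 6), (0, 2, 6)] then 1 else 0 := by
  rw [fanoForm_apply, dotProduct_single, mul_one]
  fin_cases i <;> fin_cases j <;> try exact absurd hij (by decide)
  all_goals fin_cases k <;> try exact absurd hjk (by decide)
  all_goals simp [fanoCross, Pi.single_apply]

theorem fanoCross_fanoCross (a b : Fin 7 → ℝ) :
    fanoCross b (fanoCross a b) = (b ⬝ᵥ b) • a - (a ⬝ᵥ b) • b := by
  ext m
  fin_cases m <;> simp [fanoCross, dotProduct, Fin.sum_univ_seven] <;> ring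

theorem LinearIndependent.fanoCross_ne_zero {a b : Fin 7 → ℝ}
    (hab : LinearIndependent ℝ ![a, b]) : fanoCross a b ≠ 0 := by
  intro h
  have hdep : (b ⬝ᵥ b) • a + (-(a ⬝ᵥ b)) • b = 0 := by
    rw [neg_smul, ← sub_eq_add_neg, ← fanoCross_fanoCross, h]
    ext m; simp [fanoCross]
  have hb : b = 0 := dotProduct_self_eq_zero.mp (LinearIndependent.pair_iff.mp hab _ _ hdep).1
  exact hab.ne_zero 1 (by simpa using hb)

/-- The real alternating trilinear form on `ℝ⁷` with trivector
`t = f₁₂₄ + f₂₃₅ + f₃₄₆ + f₄₅₇ + f₅₆₁ + f₆₇₂ + f₇₁₃` has no singular lines.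
(Indices below are 0-based; the sorted triples with sign `+1` are
`(0,1,3),(1,2,4),(2,3,5),(3,4,6),(0,4,5),(1,5,6),(0,2,6)`.) -/
theorem stmt_4 (T : AlternatingMap ℝ (Fin 7 → ℝ) ℝ (Fin 3))
    (hT : ∀ i j k : Fin 7, i < j → j < k →
      T ![Pi.single i 1, Pi.single j 1, Pi.single k 1] =
        if ((i : ℕ), (j : ℕ), (k : ℕ)) ∈
            [((0:ℕ), (1:ℕ), (3:ℕ)), (1, 2, 4), (2, 3, 5), (3, 4, 6),
              (0, 4, 5), (1, 5, 6), (0, 2, 6)] then 1 else 0) :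
    ∀ a b : Fin 7 → ℝ, LinearIndependent ℝ ![a, b] →
      ∃ x : Fin 7 → ℝ, T ![a, b, x] ≠ 0 := by
  have hT_eq : T = fanoForm := by
    refine AlternatingMap.ext_of_basis_strictMono (Pi.basisFun ℝ (Fin 7)) fun v hv => ?_
    have hv01 : v 0 < v 1 := hv (by decide)
    have hv12 : v 1 < v 2 := hv (by decide)
    have hbasis : Pi.basisFun ℝ (Fin 7) ∘ v =
        ![Pi.single (v 0) 1, Pi.single (v 1) 1, Pi.single (v 2) 1] := by
      ext1 s; fin_cases s <;> simp
    rw [hbasis, hT _ _ _ hv01 hv12, fanoForm_single _ _ _ hv01 hv12]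
  intro a b hab
  obtain ⟨m, hm⟩ := Function.ne_iff.mp hab.fanoCross_ne_zero
  exact ⟨Pi.single m 1, by rwa [hT_eq, fanoForm_apply, dotProduct_single, mul_one]⟩
end

section
/- Let ℝ ⊕ V be made into an algebra A where V is a real inner product space equipped with a bilinear map × : V × V → V satisfying x×y = −y×x, (x×y)·x = 0 = (x×y)·y, and x×y ≠ 0 whenever x, y are linearly independent; the product on A is (α,x)(β,y) = (αβ − x·y, αy + βx + x×y). Then A has no zero divisors: if (α,x)(β,y) = 0 then (α,x) = 0 or (β,y) = 0. -/
/-!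
Pairing the vector part of the product with `x × y` kills the terms `α y + β x` and leaves
`‖x × y‖² = 0`. Without the cross term, pairing the vector part with `x` and with `y` gives
`β (α² + ‖x‖²) = 0` and `α (β² + ‖y‖²) = 0`, which settles every case except `α = β = 0`,
`x ⟂ y`; there `x × y = 0` forces `x, y` to be dependent, and dependent orthogonal vectors
cannot both be nonzero.
-/

open scoped RealInnerProductSpace InnerProductSpace

theorem linearIndependent_pair_of_inner_eq_zero {𝕜 E : Type*} [RCLike 𝕜]
    [NormedAddCommGroup E] [InnerProductSpace 𝕜 E] {x y : E} (hx : x ≠ 0) (hy : y ≠ 0)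
    (hxy : ⟪x, y⟫_𝕜 = 0) : LinearIndependent 𝕜 ![x, y] := by
  refine linearIndependent_of_ne_zero_of_inner_eq_zero (Fin.forall_fin_two.mpr ⟨hx, hy⟩) ?_
  have hyx : ⟪y, x⟫_𝕜 = 0 := inner_eq_zero_symm.mp hxy
  intro i j hij
  fin_cases i <;> fin_cases j <;> simp_all

section Real

variable {V : Type*} [NormedAddCommGroup V] [InnerProductSpace ℝ V]

theorem eq_zero_of_add_eq_zero_of_inner_eq_zero {a b : ℝ} {u v w : V}
    (hu : ⟪w, u⟫ = 0) (hv : ⟪w, v⟫ = 0) (h : a • u + b • v + w = 0) : w = 0 := by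
  have hw : ⟪w, a • u + b • v + w⟫ = 0 := by rw [h, inner_zero_right]
  rwa [inner_add_right, inner_add_right, real_inner_smul_right, real_inner_smul_right, hu, hv,
    mul_zero, mul_zero, zero_add, zero_add, inner_self_eq_zero] at hw

theorem eq_zero_or_of_mul_eq_inner_of_smul_add_smul_eq_zero {α β : ℝ} {x y : V}
    (h₁ : α * β = ⟪x, y⟫) (h₂ : α • y + β • x = 0) : β = 0 ∨ (α = 0 ∧ x = 0) := by
  have hx : ⟪x, α • y + β • x⟫ = 0 := by rw [h₂, inner_zero_right]
  rw [inner_add_right, real_inner_smul_right, real_inner_smul_right,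
    real_inner_self_eq_norm_sq, ← h₁] at hx
  have hprod : β * (α ^ 2 + ‖x‖ ^ 2) = 0 := by linear_combination hx
  refine (mul_eq_zero.mp hprod).imp id fun h ↦ ?_
  have hα : α = 0 := by nlinarith [sq_nonneg α, sq_nonneg ‖x‖]
  exact ⟨hα, norm_eq_zero.mp (by simpa [hα] using h)⟩

end Real

theorem stmt_5_general (V : Type*) [NormedAddCommGroup V] [InnerProductSpace ℝ V]
    (cross : V →ₗ[ℝ] V →ₗ[ℝ] V)
    (hx : ∀ x y : V, ⟪cross x y, x⟫ = (0 : ℝ))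
    (hy : ∀ x y : V, ⟪cross x y, y⟫ = (0 : ℝ))
    (hne : ∀ x y : V, LinearIndependent ℝ ![x, y] → cross x y ≠ 0) :
    ∀ (α β : ℝ) (x y : V),
      α * β - ⟪x, y⟫ = 0 → α • y + β • x + cross x y = 0 →
        (α = 0 ∧ x = 0) ∨ (β = 0 ∧ y = 0) := by
  intro α β x y h₁ h₂
  have hcross : cross x y = 0 := eq_zero_of_add_eq_zero_of_inner_eq_zero (hy x y) (hx x y) h₂
  rw [hcross, add_zero] at h₂
  have h₁ : α * β = ⟪x, y⟫ := sub_eq_zero.mp h₁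
  rcases eq_zero_or_of_mul_eq_inner_of_smul_add_smul_eq_zero h₁ h₂ with hβ | hαx
  · rcases eq_zero_or_of_mul_eq_inner_of_smul_add_smul_eq_zero
        (by rwa [mul_comm, real_inner_comm]) ((add_comm _ _).trans h₂) with hα | hβy
    · subst hα hβ
      by_contra! hxy
      exact hne x y (linearIndependent_pair_of_inner_eq_zero (hxy.1 rfl) (hxy.2 rfl)
        (by simpa using h₁.symm)) hcross
    · exact Or.inr hβy
  · exact Or.inl hαx

/-- If `V` is a real inner product space with a bilinear map `×` satisfying
`x×y = −y×x`, `(x×y)·x = 0 = (x×y)·y`, and `x×y ≠ 0` for linearly independent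
`x, y`, then the algebra `ℝ ⊕ V` with product
`(α,x)(β,y) = (αβ − x·y, αy + βx + x×y)` has no zero divisors. -/
theorem stmt_5 (V : Type*) [NormedAddCommGroup V] [InnerProductSpace ℝ V]
    (cross : V →ₗ[ℝ] V →ₗ[ℝ] V)
    (hanti : ∀ x y : V, cross x y = -cross y x)
    (hx : ∀ x y : V, ⟪cross x y, x⟫ = (0 : ℝ))
    (hy : ∀ x y : V, ⟪cross x y, y⟫ = (0 : ℝ))
    (hne : ∀ x y : V, LinearIndependent ℝ ![x, y] → cross x y ≠ 0) :
    ∀ (α β : ℝ) (x y : V),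
      α * β - ⟪x, y⟫ = 0 → α • y + β • x + cross x y = 0 →
        (α = 0 ∧ x = 0) ∨ (β = 0 ∧ y = 0) :=
  stmt_5_general V cross hx hy hne
end

section
/- Let q = 2^h. There exists ρ ∈ GF(q^2) \ GF(q) such that Tr(ρ) = 1 and Tr(ρ^2) = 1, where Tr(β) = β + β^q is the trace from GF(q^2) to GF(q). Moreover: (i) if h is odd, ρ can be chosen with additionally Tr(ρ^3) = 0; (ii) if h is even, then for any pre-assigned μ ∈ GF(q) with absolute trace tr(μ) = 1, ρ can be chosen with Tr(ρ^3) = μ. -/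
open Polynomial Finset

private lemma aux9_card_roots {F : Type*} [Field F] (P : F[X]) (hP : P ≠ 0) :
    {x : F | P.eval x = 0}.ncard ≤ P.natDegree := by
  classical
  have hset : {x : F | P.eval x = 0} = ↑P.roots.toFinset := by
    ext x; simp [Polynomial.mem_roots, hP, Polynomial.IsRoot]
  rw [hset, Set.ncard_coe_finset]
  exact le_trans (Multiset.toFinset_card_le _) P.card_roots'

private lemma aux9_surj {L : Type*} [Field L] [Fintype L] (f : L →+ L) (T : Set L)
    (hrange : ∀ x, f x ∈ T)
    (hcard : Nat.card f.ker * T.ncard ≤ Fintype.card L) :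
    ∀ y ∈ T, ∃ x, f x = y := by
  have h1 : Nat.card L = Nat.card (L ⧸ f.ker) * Nat.card f.ker :=
    AddSubgroup.card_eq_card_quotient_mul_card_addSubgroup f.ker
  have h2 : Nat.card (L ⧸ f.ker) = Nat.card f.range :=
    Nat.card_congr (QuotientAddGroup.quotientKerEquivRange f).toEquiv
  have hker0 : 0 < Nat.card f.ker := Nat.card_pos
  have hrangeT : (f.range : Set L) ⊆ T := by rintro _ ⟨x, rfl⟩; exact hrange x
  have hcard2 : T.ncard ≤ (f.range : Set L).ncard := by
    have he : Nat.card f.ker * T.ncard ≤ Nat.card f.ker * Nat.card f.range := by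
      have hLr : Fintype.card L = Nat.card f.ker * Nat.card f.range := by
        rw [← Nat.card_eq_fintype_card, h1, h2]; ring
      exact le_trans hcard (le_of_eq hLr)
    have h3 := Nat.le_of_mul_le_mul_left he hker0
    calc T.ncard ≤ Nat.card f.range := h3
    _ = (f.range : Set L).ncard := Nat.card_coe_set_eq _
  have heq := Set.eq_of_subset_of_ncard_le hrangeT hcard2 (Set.toFinite T)
  intro y hy
  rw [← heq] at hy
  obtain ⟨x, hx⟩ := hy
  exact ⟨x, hx⟩

private lemma aux9_telescope {L : Type*} [Field L] [CharP L 2] (x : L) (h : ℕ) :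
    ∑ i ∈ Finset.range h, (x + x ^ 2) ^ 2 ^ i = x ^ 2 ^ h + x := by
  haveI : ExpChar L 2 := .prime Nat.prime_two
  have key : ∀ i, (x + x ^ 2) ^ 2 ^ i = x ^ 2 ^ (i + 1) - x ^ 2 ^ i := by
    intro i
    rw [add_pow_char_pow, CharTwo.sub_eq_add, ← pow_mul, ← pow_succ']
    ring
  rw [Finset.sum_congr rfl fun i _ => key i, Finset.sum_range_sub fun i => x ^ 2 ^ i,
    pow_zero, pow_one, CharTwo.sub_eq_add, add_comm]

private lemma aux9_char2 {h : ℕ} {F : Type*} [Field F] [Fintype F]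
    (hF : Fintype.card F = 2 ^ h) : CharP F 2 := by
  have hprime : (ringChar F).Prime := CharP.char_is_prime F (ringChar F)
  have hdvd : ringChar F ∣ 2 ^ h := by
    rw [← hF]
    exact (CharP.cast_eq_zero_iff F (ringChar F) _).mp (FiniteField.cast_card_eq_zero F)
  exact ringChar.of_eq
    ((Nat.prime_dvd_prime_iff_eq hprime Nat.prime_two).mp (hprime.dvd_of_dvd_pow hdvd))

/-- For `q = 2^h` there exists `ρ ∈ GF(q²) \ GF(q)` with `Tr(ρ) = Tr(ρ²) = 1`,
where `Tr(β) = β + β^q`.  Moreover if `h` is odd one can also achieve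
`Tr(ρ³) = 0`, and if `h` is even one can achieve `Tr(ρ³) = μ` for any
pre-assigned `μ ∈ GF(q)` of absolute trace `1`. -/
theorem stmt_9 (h : ℕ) (hpos : 0 < h) (F K : Type*) [Field F] [Fintype F]
    [Field K] [Fintype K] [Algebra F K]
    (hF : Fintype.card F = 2 ^ h)
    (hK : Fintype.card K = Fintype.card F ^ 2) :
    (∃ ρ : K, ρ ∉ Set.range (algebraMap F K) ∧
      ρ + ρ ^ Fintype.card F = 1 ∧ ρ ^ 2 + (ρ ^ 2) ^ Fintype.card F = 1) ∧
    (Odd h → ∃ ρ : K, ρ ∉ Set.range (algebraMap F K) ∧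
      ρ + ρ ^ Fintype.card F = 1 ∧ ρ ^ 2 + (ρ ^ 2) ^ Fintype.card F = 1 ∧
      ρ ^ 3 + (ρ ^ 3) ^ Fintype.card F = 0) ∧
    (Even h → ∀ μ : F, ∑ i ∈ Finset.range h, μ ^ 2 ^ i = 1 →
      ∃ ρ : K, ρ ∉ Set.range (algebraMap F K) ∧
        ρ + ρ ^ Fintype.card F = 1 ∧ ρ ^ 2 + (ρ ^ 2) ^ Fintype.card F = 1 ∧
        ρ ^ 3 + (ρ ^ 3) ^ Fintype.card F = algebraMap F K μ) := by
  classical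
  haveI hF2 : CharP F 2 := aux9_char2 hF
  haveI hK2 : CharP K 2 := charP_of_injective_algebraMap (algebraMap F K).injective 2
  haveI : ExpChar F 2 := .prime Nat.prime_two
  haveI : ExpChar K 2 := .prime Nat.prime_two
  have hq2 : 2 ≤ Fintype.card F := by
    rw [hF]
    calc 2 = 2 ^ 1 := (pow_one 2).symm
    _ ≤ 2 ^ h := Nat.pow_le_pow_right (by norm_num) hpos
  have halg : Function.Injective (algebraMap F K) := (algebraMap F K).injective
  have htwoK : (2 : K) = 0 := CharTwo.two_eq_zero
  have htwoF : (2 : F) = 0 := CharTwo.two_eq_zero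
  have hS_eq : Set.range (algebraMap F K) = {x : K | x ^ Fintype.card F = x} := by
    apply Set.eq_of_subset_of_ncard_le
    · rintro _ ⟨a, rfl⟩
      show (algebraMap F K a) ^ Fintype.card F = algebraMap F K a
      rw [← map_pow, FiniteField.pow_card]
    · have hP : (X ^ Fintype.card F - X : K[X]) ≠ 0 := by
        intro h0
        have h1 := congrArg (fun P => Polynomial.coeff P (Fintype.card F)) h0
        simp only [Polynomial.coeff_sub, Polynomial.coeff_X_pow, Polynomial.coeff_X,
          Polynomial.coeff_zero, if_pos rfl] at h1
        rw [if_neg (by omega : ¬ (1 = Fintype.card F))] at h1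
        norm_num at h1
      have hdeg : (X ^ Fintype.card F - X : K[X]).natDegree ≤ Fintype.card F := by
        refine le_trans (Polynomial.natDegree_sub_le _ _) ?_
        simp only [Polynomial.natDegree_X_pow, Polynomial.natDegree_X]
        omega
      have hsets : {x : K | x ^ Fintype.card F = x}
          = {x : K | (X ^ Fintype.card F - X : K[X]).eval x = 0} := by
        ext x; simp [sub_eq_zero]
      have h1 : ({x : K | x ^ Fintype.card F = x}).ncard ≤ Fintype.card F := by
        rw [hsets]; exact le_trans (aux9_card_roots _ hP) hdeg
      have h2 : (Set.range (algebraMap F K)).ncard = Fintype.card F := by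
        rw [← Nat.card_coe_set_eq, Nat.card_range_of_injective halg,
          Nat.card_eq_fintype_card]
      omega
    · exact Set.toFinite _
  have hfrobK : ∀ x y : K,
      (x + y) ^ Fintype.card F = x ^ Fintype.card F + y ^ Fintype.card F := by
    intro x y; rw [hF]; exact add_pow_char_pow ..
  set f : K →+ K := AddMonoidHom.mk' (fun x => x + x ^ Fintype.card F)
    (fun x y => by show (x + y) + (x + y) ^ Fintype.card F = _; rw [hfrobK]; ring) with hfdef
  have hfker : (f.ker : Set K) = {x : K | x ^ Fintype.card F = x} := by
    ext x
    simp only [SetLike.mem_coe, AddMonoidHom.mem_ker, hfdef, AddMonoidHom.mk'_apply,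
      Set.mem_setOf_eq]
    constructor
    · intro hx; linear_combination hx - x * htwoK
    · intro hx; linear_combination hx + x * htwoK
  have hxq2 : ∀ x : K, (x ^ Fintype.card F) ^ Fintype.card F = x := by
    intro x
    rw [← pow_mul, ← sq, ← hK, FiniteField.pow_card]
  have hfmem : ∀ x : K, f x ∈ {x : K | x ^ Fintype.card F = x} := by
    intro x
    show (x + x ^ Fintype.card F) ^ Fintype.card F = x + x ^ Fintype.card F
    rw [hfrobK, hxq2, add_comm]
  have hkerq : Nat.card f.ker = Fintype.card F := by
    have e1 : Nat.card f.ker = ((f.ker : Set K)).ncard := Nat.card_coe_set_eq _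
    rw [e1, hfker, ← hS_eq, ← Nat.card_coe_set_eq,
      Nat.card_range_of_injective halg, Nat.card_eq_fintype_card]
  have hsurjK := aux9_surj f {x : K | x ^ Fintype.card F = x} hfmem (by
    rw [hkerq, ← hS_eq, ← Nat.card_coe_set_eq, Nat.card_range_of_injective halg,
      Nat.card_eq_fintype_card, hK, sq])
  obtain ⟨ρ₀, hρ₀⟩ := hsurjK 1 (by simp)
  have hρ₀ : ρ₀ + ρ₀ ^ Fintype.card F = 1 := hρ₀
  have hnotin : ∀ ρ : K, ρ + ρ ^ Fintype.card F = 1 → ρ ∉ Set.range (algebraMap F K) := by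
    intro ρ hρ hmem
    rw [hS_eq, Set.mem_setOf_eq] at hmem
    rw [hmem] at hρ
    exact one_ne_zero (α := K) (by linear_combination -hρ + ρ * htwoK)
  have hρq : ∀ ρ : K, ρ + ρ ^ Fintype.card F = 1 → ρ ^ Fintype.card F = 1 + ρ := by
    intro ρ hρ; linear_combination hρ - ρ * htwoK
  have hTr2 : ∀ ρ : K, ρ + ρ ^ Fintype.card F = 1 →
      ρ ^ 2 + (ρ ^ 2) ^ Fintype.card F = 1 := by
    intro ρ hρ
    rw [← pow_mul, mul_comm 2 (Fintype.card F), pow_mul, hρq ρ hρ]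
    linear_combination (ρ ^ 2 + ρ) * htwoK
  have hTr3 : ∀ ρ : K, ρ + ρ ^ Fintype.card F = 1 →
      ρ ^ 3 + (ρ ^ 3) ^ Fintype.card F = ρ ^ 2 + ρ + 1 := by
    intro ρ hρ
    rw [← pow_mul, mul_comm 3 (Fintype.card F), pow_mul, hρq ρ hρ]
    linear_combination (ρ ^ 3 + ρ ^ 2 + ρ) * htwoK
  -- the F-side: solving λ + λ² = t whenever tr t = 0
  set ψ : F →+ F := AddMonoidHom.mk' (fun x => x + x ^ 2)
    (fun x y => by show (x + y) + (x + y) ^ 2 = _; rw [add_pow_char]; ring) with hψdef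
  have hψker : (ψ.ker : Set F) = {0, 1} := by
    ext x
    simp only [SetLike.mem_coe, AddMonoidHom.mem_ker, hψdef, AddMonoidHom.mk'_apply,
      Set.mem_insert_iff, Set.mem_singleton_iff]
    constructor
    · intro hx
      have hfac : x * (1 + x) = 0 := by linear_combination hx
      rcases mul_eq_zero.mp hfac with h1 | h1
      · exact Or.inl h1
      · exact Or.inr (by linear_combination h1 - htwoF)
    · rintro (rfl | rfl)
      · ring
      · linear_combination htwoF
  have hψmem : ∀ x : F, ψ x ∈ {x : F | ∑ i ∈ Finset.range h, x ^ 2 ^ i = 0} := by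
    intro x
    show ∑ i ∈ Finset.range h, (x + x ^ 2) ^ 2 ^ i = 0
    rw [aux9_telescope, ← hF, FiniteField.pow_card]
    exact CharTwo.add_self_eq_zero x
  have hsolveF := aux9_surj ψ {x : F | ∑ i ∈ Finset.range h, x ^ 2 ^ i = 0} hψmem (by
    have hk2 : Nat.card ψ.ker = 2 := by
      have e1 : Nat.card ψ.ker = ((ψ.ker : Set F)).ncard := Nat.card_coe_set_eq _
      rw [e1, hψker, Set.ncard_pair (zero_ne_one (α := F))]
    set P : F[X] := ∑ i ∈ Finset.range h, X ^ 2 ^ i with hPdef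
    have hPev : ∀ x : F, P.eval x = ∑ i ∈ Finset.range h, x ^ 2 ^ i := by
      intro x; simp [hPdef, Polynomial.eval_finset_sum]
    have hPco : P.coeff (2 ^ (h - 1)) = 1 := by
      rw [hPdef, Polynomial.finset_sum_coeff, Finset.sum_eq_single (h - 1)]
      · simp [Polynomial.coeff_X_pow]
      · intro i _ hne
        rw [Polynomial.coeff_X_pow, if_neg]
        intro heq
        exact hne (Nat.pow_right_injective le_rfl heq.symm)
      · intro hnm
        exact absurd (Finset.mem_range.mpr (by omega)) hnm
    have hPne : P ≠ 0 := by
      intro h0; rw [h0, Polynomial.coeff_zero] at hPco; norm_num at hPco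
    have hPdeg : P.natDegree ≤ 2 ^ (h - 1) := by
      rw [hPdef]
      refine Polynomial.natDegree_sum_le_of_forall_le _ _ ?_
      intro i hi
      rw [Polynomial.natDegree_X_pow]
      exact Nat.pow_le_pow_right (by norm_num) (by rw [Finset.mem_range] at hi; omega)
    have hT : ({x : F | ∑ i ∈ Finset.range h, x ^ 2 ^ i = 0}).ncard ≤ 2 ^ (h - 1) := by
      have hse : {x : F | ∑ i ∈ Finset.range h, x ^ 2 ^ i = 0} = {x : F | P.eval x = 0} := by
        ext x; rw [Set.mem_setOf_eq, Set.mem_setOf_eq, hPev]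
      rw [hse]
      exact le_trans (aux9_card_roots _ hPne) hPdeg
    calc Nat.card ψ.ker * ({x : F | ∑ i ∈ Finset.range h, x ^ 2 ^ i = 0}).ncard
        = 2 * ({x : F | ∑ i ∈ Finset.range h, x ^ 2 ^ i = 0}).ncard := by rw [hk2]
    _ ≤ 2 * 2 ^ (h - 1) := Nat.mul_le_mul_left 2 hT
    _ = Fintype.card F := by rw [hF, ← pow_succ']; congr 1; omega)
  -- the element c with algebraMap c = ρ₀² + ρ₀ and tr c = 1
  have hcmem : ρ₀ ^ 2 + ρ₀ ∈ Set.range (algebraMap F K) := by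
    rw [hS_eq, Set.mem_setOf_eq]
    rw [hfrobK, ← pow_mul, mul_comm 2 (Fintype.card F), pow_mul, hρq ρ₀ hρ₀]
    linear_combination (ρ₀ + 1) * htwoK
  obtain ⟨c, hc⟩ := hcmem
  have htrc : ∑ i ∈ Finset.range h, c ^ 2 ^ i = 1 := by
    apply halg
    rw [map_sum, map_one]
    have hterm : ∀ i, algebraMap F K (c ^ 2 ^ i) = (ρ₀ + ρ₀ ^ 2) ^ 2 ^ i := by
      intro i; rw [map_pow, hc, add_comm (ρ₀ ^ 2) ρ₀]
    rw [Finset.sum_congr rfl fun i _ => hterm i, aux9_telescope, ← hF, hρq ρ₀ hρ₀]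
    linear_combination ρ₀ * htwoK
  have htradd : ∀ a b : F, ∑ i ∈ Finset.range h, (a + b) ^ 2 ^ i
      = ∑ i ∈ Finset.range h, a ^ 2 ^ i + ∑ i ∈ Finset.range h, b ^ 2 ^ i := by
    intro a b
    rw [← Finset.sum_add_distrib]
    exact Finset.sum_congr rfl fun i _ => add_pow_char_pow ..
  have htrone : ∑ i ∈ Finset.range h, (1 : F) ^ 2 ^ i = (h : F) := by simp
  -- solving for a generic target
  have main : ∀ t : F, (∑ i ∈ Finset.range h, t ^ 2 ^ i = 0) →
      ∃ ρ : K, ρ ∉ Set.range (algebraMap F K) ∧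
        ρ + ρ ^ Fintype.card F = 1 ∧ ρ ^ 2 + (ρ ^ 2) ^ Fintype.card F = 1 ∧
        ρ ^ 3 + (ρ ^ 3) ^ Fintype.card F = algebraMap F K (c + 1 + t) := by
    intro t ht
    obtain ⟨lam, hlam⟩ := hsolveF t ht
    have hlam : lam + lam ^ 2 = t := hlam
    set L : K := algebraMap F K lam with hLdef
    have hLq : L ^ Fintype.card F = L := by rw [hLdef, ← map_pow, FiniteField.pow_card]
    have hρ : (ρ₀ + L) + (ρ₀ + L) ^ Fintype.card F = 1 := by
      rw [hfrobK, hLq, hρq ρ₀ hρ₀]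
      linear_combination (ρ₀ + L) * htwoK
    refine ⟨ρ₀ + L, hnotin _ hρ, hρ, hTr2 _ hρ, ?_⟩
    rw [hTr3 _ hρ]
    have hL : L + L ^ 2 = algebraMap F K t := by
      rw [hLdef, ← map_pow, ← map_add, hlam]
    rw [map_add, map_add, map_one]
    linear_combination hL - hc + ρ₀ * L * htwoK
  refine ⟨⟨ρ₀, hnotin ρ₀ hρ₀, hρ₀, hTr2 ρ₀ hρ₀⟩, ?_, ?_⟩
  · intro hodd
    obtain ⟨ρ, h1, h2, h3, h4⟩ := main (c + 1) (by
      rw [htradd, htrc, htrone]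
      obtain ⟨k, hk⟩ := hodd
      subst hk
      push_cast
      linear_combination (k + 1) * htwoF)
    refine ⟨ρ, h1, h2, h3, ?_⟩
    rw [h4]
    have hz : c + 1 + (c + 1) = 0 := by linear_combination (c + 1) * htwoF
    rw [hz, map_zero]
  · intro heven μ hμ
    obtain ⟨ρ, h1, h2, h3, h4⟩ := main (c + 1 + μ) (by
      rw [htradd, htradd, htrc, htrone, hμ]
      obtain ⟨k, hk⟩ := heven
      subst hk
      push_cast
      linear_combination (k + 1) * htwoF)
    refine ⟨ρ, h1, h2, h3, ?_⟩
    rw [h4]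
    congr 1
    linear_combination (c + 1) * htwoF
end

section
/- Let q be a prime power, let V₃ = GF(q²)³ regarded as a 6-dimensional vector space V over GF(q), let τ be a nonzero alternating GF(q²)-trilinear form on V₃, and define T(x,y,z) = Tr(τ(x,y,z)) where Tr : GF(q²) → GF(q) is the field trace. Then T is a nondegenerate alternating GF(q)-trilinear form on V, and for every nonzero a ∈ V₃ and every ρ ∈ GF(q²) \ GF(q), the 2-dimensional GF(q)-subspace span_{GF(q)}{a, ρa} is a T-singular line. -/
/-!
If `a ≠ 0`, extending `a` to a basis shows that `(x, y) ↦ τ(a, x, y)` is onto `GF(q²)`, because a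
nonzero top-degree alternating form does not vanish on a basis; and `Tr` is not identically zero,
since `X ^ q + X` has fewer than `q²` roots. Hence `T(a, ·, ·) ≠ 0`. On the other hand
`span_{GF(q)} {a, ρa}` lies in the `GF(q²)`-line through `a`, on which `τ(·, ·, x)` vanishes.
-/

open Module

open Polynomial in
theorem exists_add_pow_ne_zero {K : Type*} [Field K] [Fintype K] {q : ℕ} (hq : 1 < q)
    (hqK : q < Fintype.card K) : ∃ z : K, z + z ^ q ≠ 0 := by
  by_contra! h
  have hdeg : (X ^ q + X : K[X]).natDegree = q := by
    rw [natDegree_add_eq_left_of_natDegree_lt] <;> simp [hq]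
  have hzero : (X ^ q + X : K[X]) = 0 :=
    eq_zero_of_forall_eval_zero_of_natDegree_lt_card _ (fun z => by simpa [add_comm] using h z)
      (by rw [hdeg, Cardinal.mk_fintype]; exact_mod_cast hqK)
  simp [hzero] at hdeg
  omega

theorem linearIndependent_pair_smul (F : Type*) {K M : Type*} [Field F] [Field K] [Algebra F K]
    [AddCommGroup M] [Module K M] [Module F M] [IsScalarTower F K M] {a : M} (ha : a ≠ 0)
    {ρ : K} (hρ : ρ ∉ Set.range (algebraMap F K)) : LinearIndependent F ![a, ρ • a] := by
  rw [LinearIndependent.pair_iff]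
  intro s t hst
  have hcoeff : algebraMap F K s + algebraMap F K t * ρ = 0 := by
    refine (smul_eq_zero.mp ?_).resolve_right ha
    rwa [add_smul, mul_smul, algebraMap_smul, algebraMap_smul]
  have ht : t = 0 := by
    by_contra ht
    refine hρ ⟨-(s / t), ?_⟩
    rw [map_neg, map_div₀, ← neg_div, div_eq_iff ((map_ne_zero _).mpr ht)]
    linear_combination -hcoeff
  subst ht
  simpa using hcoeff

theorem span_pair_smul_le (F : Type*) {K M : Type*} [Field F] [Field K] [Algebra F K]
    [AddCommGroup M] [Module K M] [Module F M] [IsScalarTower F K M] (a : M) (ρ : K) :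
    Submodule.span F {a, ρ • a} ≤ (K ∙ a).restrictScalars F :=
  Submodule.span_le.mpr <| Set.insert_subset_iff.mpr
    ⟨Submodule.mem_span_singleton_self a,
      Set.singleton_subset_iff.mpr (Submodule.smul_mem _ ρ (Submodule.mem_span_singleton_self a))⟩

namespace AlternatingMap

def restrictScalars (R : Type*) {A M N ι : Type*} [Semiring R] [Semiring A] [SMul R A]
    [AddCommMonoid M] [AddCommMonoid N] [Module R M] [Module R N] [Module A M] [Module A N]
    [IsScalarTower R A M] [IsScalarTower R A N] (f : M [⋀^ι]→ₗ[A] N) : M [⋀^ι]→ₗ[R] N :=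
  { f.toMultilinearMap.restrictScalars R with
    map_eq_zero_of_eq' := fun _ _ _ h hij => f.map_eq_zero_of_eq _ h hij }

theorem exists_apply_eq_map_ne_zero {K V ι : Type*} [Field K] [AddCommGroup V] [Module K V]
    [Finite ι] (b : Basis ι K V) {τ : V [⋀^ι]→ₗ[K] K} (hτ : τ ≠ 0) {a : V} (ha : a ≠ 0)
    (i : ι) : ∃ v : ι → V, v i = a ∧ τ v ≠ 0 := by
  classical
  have hs : LinearIndepOn K id {a} := (linearIndepOn_singleton_iff K).mpr ha
  let c := Basis.extend hs
  let e : ι ≃ _ := (b.indexEquiv c).trans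
    (Equiv.swap (b.indexEquiv c i) ⟨a, Basis.subset_extend hs rfl⟩)
  refine ⟨c.reindex e.symm, ?_, (τ.map_basis_ne_zero_iff _).mpr hτ⟩
  simp [e, c]

section Three

variable {R M N : Type*} [CommSemiring R] [AddCommMonoid M] [Module R M] [AddCommMonoid N]
  [Module R N] (τ : M [⋀^Fin 3]→ₗ[R] N)

theorem map_vecCons_smul_snd (α : R) (a x y : M) : τ ![a, α • x, y] = α • τ ![a, x, y] := by
  convert τ.map_smul_univ ![1, α, 1] ![a, x, y] using 2
  · funext i; fin_cases i <;> simp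
  · simp [Fin.prod_univ_three]

theorem map_vecCons_smul_smul_eq_zero (β γ : R) (a x : M) : τ ![β • a, γ • a, x] = 0 := by
  convert τ.map_smul_univ ![β, γ, 1] ![a, a, x] using 1
  · congr 1; funext i; fin_cases i <;> simp
  · rw [τ.map_eq_zero_of_eq ![a, a, x] (i := 0) (j := 1) rfl (by decide), smul_zero]

theorem map_vecCons_eq_zero_of_mem_span_singleton {a b c : M} (hb : b ∈ R ∙ a)
    (hc : c ∈ R ∙ a) (x : M) : τ ![b, c, x] = 0 := by
  obtain ⟨β, rfl⟩ := Submodule.mem_span_singleton.mp hb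
  obtain ⟨γ, rfl⟩ := Submodule.mem_span_singleton.mp hc
  exact τ.map_vecCons_smul_smul_eq_zero β γ a x

end Three

theorem exists_map_vecCons_eq {K V : Type*} [Field K] [AddCommGroup V] [Module K V]
    (b : Basis (Fin 3) K V) {τ : V [⋀^Fin 3]→ₗ[K] K} (hτ : τ ≠ 0) {a : V} (ha : a ≠ 0)
    (z : K) : ∃ x y, τ ![a, x, y] = z := by
  obtain ⟨v, hv, hτv⟩ := exists_apply_eq_map_ne_zero b hτ ha 0
  have hv3 : v = ![a, v 1, v 2] := by funext i; fin_cases i <;> simp [hv]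
  refine ⟨(z / τ v) • v 1, v 2, ?_⟩
  rw [map_vecCons_smul_snd, ← hv3, smul_eq_mul, div_mul_cancel₀ _ hτv]

end AlternatingMap

/-- Let `τ` be a nonzero alternating `GF(q²)`-trilinear form on `V₃ = GF(q²)³`
and `T = Tr ∘ τ` with `Tr(β) = β + β^q`.  Then `T` is a nondegenerate
alternating `GF(q)`-trilinear form on the 6-dimensional `GF(q)`-space `V₃`,
and for every nonzero `a` and every `ρ ∈ GF(q²) \ GF(q)` the `GF(q)`-span of
`{a, ρa}` is a `T`-singular line. -/
theorem stmt_12 (F K : Type*) [Field F] [Fintype F] [Field K] [Fintype K]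
    [Algebra F K] (hK : Fintype.card K = Fintype.card F ^ 2)
    (τ : AlternatingMap K (Fin 3 → K) K (Fin 3)) (hτ : τ ≠ 0) :
    (∃ T : AlternatingMap F (Fin 3 → K) K (Fin 3),
        ∀ v, T v = τ v + (τ v) ^ Fintype.card F) ∧
    (∀ a : Fin 3 → K,
      (∀ x y, τ ![a, x, y] + (τ ![a, x, y]) ^ Fintype.card F = 0) → a = 0) ∧
    (∀ a : Fin 3 → K, a ≠ 0 → ∀ ρ : K, ρ ∉ Set.range (algebraMap F K) →
      Module.finrank F (Submodule.span F {a, ρ • a} : Submodule F (Fin 3 → K)) = 2 ∧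
      ∀ b ∈ Submodule.span F {a, ρ • a}, ∀ c ∈ Submodule.span F {a, ρ • a},
        ∀ x, τ ![b, c, x] + (τ ![b, c, x]) ^ Fintype.card F = 0) := by
  have hq : 1 < Fintype.card F := Fintype.one_lt_card
  refine ⟨⟨(LinearMap.id + (FiniteField.frobeniusAlgHom F K).toLinearMap).compAlternatingMap
    (τ.restrictScalars F), fun v => rfl⟩, fun a ha => ?_, fun a ha ρ hρ => ⟨?_, ?_⟩⟩
  · by_contra ha0
    obtain ⟨z, hz⟩ := exists_add_pow_ne_zero hq (by rw [hK]; nlinarith)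
    obtain ⟨x, y, rfl⟩ := τ.exists_map_vecCons_eq (Pi.basisFun K (Fin 3)) hτ ha0 z
    exact hz (ha x y)
  · rw [← Matrix.range_cons_cons_empty a (ρ • a) ![], finrank_span_eq_card
      (linearIndependent_pair_smul F ha hρ), Fintype.card_fin]
  · intro b hb c hc x
    rw [τ.map_vecCons_eq_zero_of_mem_span_singleton (span_pair_smul_le F a ρ hb)
      (span_pair_smul_le F a ρ hc), zero_pow (by omega), add_zero]
end

section
/- Let F be any field and let T be the alternating trilinear form on V = F^6 with trivector t = f_{156} + f_{246} + f_{345}. Then no subspace of V of dimension greater than 3 is totally T-singular. -/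
/-!
Write `π : F⁶ → F³` for the projection onto the coordinates `3, 4, 5` (0-based), so that
`ker π = ⟨e₀, e₁, e₂⟩` has dimension 3. Once `T` is identified with the explicit form
`f₀₄₅ + f₁₃₅ + f₂₃₄` (an alternating map is determined by its values on sorted basis triples),
one reads off that for `u, v` in a totally singular `W` the values `T(u, v, eₖ)`, `k = 0, 1, 2`,
are up to sign the components of `π u × π v`. Hence `π(W)` has dimension at most one, and
`W ≤ ker π ⊔ ⟨w₀⟩` for any `w₀ ∈ W` with `π w₀ ≠ 0`. If `dim W ≥ 4` this forces `ker π ≤ W`;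
but `T(e₀, w, e₄)`, `T(e₀, w, e₅)`, `T(e₁, w, e₅)` are the coordinates of `π w`, so then
`π(W) = 0`, a contradiction.
-/

open Module Matrix

theorem AlternatingMap.ext_of_strictMono {R M N ι : Type*} [CommSemiring R] [AddCommMonoid M]
    [Module R M] [AddCommGroup N] [Module R N] [LinearOrder ι] {n : ℕ} (b : Basis ι R M)
    {f g : M [⋀^Fin n]→ₗ[R] N} (h : ∀ v : Fin n → ι, StrictMono v → f (b ∘ v) = g (b ∘ v)) :
    f = g := by
  refine b.ext_alternating fun v hv => ?_
  set σ := Tuple.sort v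
  have hsorted : StrictMono (v ∘ σ) :=
    (Tuple.monotone_sort v).strictMono_of_injective (hv.comp σ.injective)
  have := h _ hsorted
  rwa [← Function.comp_assoc, f.map_perm, g.map_perm, smul_left_cancel_iff] at this

theorem exists_smul_eq_of_cross_eq_zero {F : Type*} [Field F] {x y : Fin 3 → F} (hx : x ≠ 0)
    (h : y ⨯₃ x = 0) : ∃ c : F, c • x = y := by
  by_contra! hc
  exact crossProduct_ne_zero_iff_linearIndependent.2 (linearIndependent_fin2.2 ⟨hx, hc⟩) h

def detMinor (R : Type*) [CommRing R] {ι : Type*} {n : ℕ} (p : Fin n → ι) :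
    (ι → R) [⋀^Fin n]→ₗ[R] R :=
  Matrix.detRowAlternating.compLinearMap (LinearMap.funLeft R R p)

theorem detMinor_apply {R : Type*} [CommRing R] {ι : Type*} {n : ℕ} (p : Fin n → ι)
    (v : Fin n → ι → R) : detMinor R p v = (Matrix.of fun r c => v r (p c)).det :=
  rfl

def IsTotallySingular {R M : Type*} [CommRing R] [AddCommGroup M] [Module R M]
    (T : M [⋀^Fin 3]→ₗ[R] R) (W : Submodule R M) : Prop :=
  ∀ a ∈ W, ∀ b ∈ W, ∀ x, T ![a, b, x] = 0

section Trivector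

variable (F : Type*) [Field F]

/-- The trivector `f₁₅₆ + f₂₄₆ + f₃₄₅` with indices shifted to start at `0`, where
`f_{ijk} = detMinor F ![i, j, k]`. -/
def trivectorForm : (Fin 6 → F) [⋀^Fin 3]→ₗ[F] F :=
  detMinor F ![0, 4, 5] + detMinor F ![1, 3, 5] + detMinor F ![2, 3, 4]

def tail345 : (Fin 6 → F) →ₗ[F] (Fin 3 → F) :=
  LinearMap.funLeft F F ![3, 4, 5]

theorem trivectorForm_apply (a b c : Fin 6 → F) :
    trivectorForm F ![a, b, c] =
      (Matrix.of ![![a 0, a 4, a 5], ![b 0, b 4, b 5], ![c 0, c 4, c 5]]).det +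
      (Matrix.of ![![a 1, a 3, a 5], ![b 1, b 3, b 5], ![c 1, c 3, c 5]]).det +
      (Matrix.of ![![a 2, a 3, a 4], ![b 2, b 3, b 4], ![c 2, c 3, c 4]]).det := by
  simp only [trivectorForm, AlternatingMap.add_apply, detMinor_apply]
  congr <;> ext r c <;> fin_cases r <;> fin_cases c <;> rfl

theorem trivectorForm_single {i j k : Fin 6} (hij : i < j) (hjk : j < k) :
    trivectorForm F ![Pi.single i 1, Pi.single j 1, Pi.single k 1] =
      if ((i : ℕ), (j : ℕ), (k : ℕ)) ∈
          [((0:ℕ), (4:ℕ), (5:ℕ)), (1, 3, 5), (2, 3, 4)] then 1 else 0 := by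
  rw [trivectorForm_apply]
  fin_cases i <;> fin_cases j <;> try (simp at hij; done)
  all_goals fin_cases k <;> try (simp at hjk; done)
  all_goals simp [Matrix.det_fin_three]

theorem finrank_ker_tail345 : finrank F (LinearMap.ker (tail345 F)) = 3 := by
  have hrange : LinearMap.range (tail345 F) = ⊤ :=
    LinearMap.range_eq_top.2 (LinearMap.funLeft_surjective_of_injective _ _ _ (by decide))
  have := (tail345 F).finrank_range_add_finrank_ker
  rw [hrange, finrank_top, finrank_fin_fun, finrank_fin_fun] at this
  omega

variable {F}

theorem eq_trivectorForm (T : (Fin 6 → F) [⋀^Fin 3]→ₗ[F] F)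
    (hT : ∀ i j k : Fin 6, i < j → j < k →
      T ![Pi.single i 1, Pi.single j 1, Pi.single k 1] =
        if ((i : ℕ), (j : ℕ), (k : ℕ)) ∈
            [((0:ℕ), (4:ℕ), (5:ℕ)), (1, 3, 5), (2, 3, 4)] then 1 else 0) :
    T = trivectorForm F := by
  refine AlternatingMap.ext_of_strictMono (Pi.basisFun F (Fin 6)) fun v hv => ?_
  have hbasis : Pi.basisFun F (Fin 6) ∘ v =
      ![Pi.single (v 0) 1, Pi.single (v 1) 1, Pi.single (v 2) 1] := by
    ext r : 1
    fin_cases r <;> simp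
  rw [hbasis, hT _ _ _ (hv (by decide)) (hv (by decide)),
    trivectorForm_single F (hv (by decide)) (hv (by decide))]

variable {W : Submodule F (Fin 6 → F)}

theorem cross_tail345_eq_zero (hW : IsTotallySingular (trivectorForm F) W) {u v : Fin 6 → F}
    (hu : u ∈ W) (hv : v ∈ W) : tail345 F u ⨯₃ tail345 F v = 0 := by
  have h0 := hW u hu v hv (Pi.single 0 1)
  have h1 := hW u hu v hv (Pi.single 1 1)
  have h2 := hW u hu v hv (Pi.single 2 1)
  simp [trivectorForm_apply, Matrix.det_fin_three] at h0 h1 h2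
  ext i
  fin_cases i <;> simp [tail345, cross_apply]
  exacts [h0, by linear_combination -h1, h2]

theorem le_ker_tail345_of_ker_le (hW : IsTotallySingular (trivectorForm F) W)
    (hKW : LinearMap.ker (tail345 F) ≤ W) : W ≤ LinearMap.ker (tail345 F) := by
  intro w hw
  have he₀ : Pi.single 0 1 ∈ W := hKW (by ext i; fin_cases i <;> simp [tail345])
  have he₁ : Pi.single 1 1 ∈ W := hKW (by ext i; fin_cases i <;> simp [tail345])
  have hw5 := hW _ he₀ w hw (Pi.single 4 1)
  have hw4 := hW _ he₀ w hw (Pi.single 5 1)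
  have hw3 := hW _ he₁ w hw (Pi.single 5 1)
  simp [trivectorForm_apply, Matrix.det_fin_three] at hw3 hw4 hw5
  ext i
  fin_cases i <;> simp [tail345]
  exacts [hw3, hw4, hw5]

theorem finrank_le_three_of_isTotallySingular (hW : IsTotallySingular (trivectorForm F) W) :
    finrank F W ≤ 3 := by
  set K := LinearMap.ker (tail345 F)
  have hK : finrank F K = 3 := finrank_ker_tail345 F
  by_cases hWK : W ≤ K
  · exact (Submodule.finrank_mono hWK).trans hK.le
  obtain ⟨w₀, hw₀, hw₀K⟩ := Set.not_subset.1 hWK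
  replace hw₀K : tail345 F w₀ ≠ 0 := hw₀K
  have hle : W ≤ K ⊔ F ∙ w₀ := by
    intro w hw
    obtain ⟨c, hc⟩ := exists_smul_eq_of_cross_eq_zero hw₀K (cross_tail345_eq_zero hW hw hw₀)
    refine Submodule.mem_sup.2 ⟨w - c • w₀, ?_, c • w₀, Submodule.mem_span_singleton.2 ⟨c, rfl⟩,
      sub_add_cancel w _⟩
    simp [K, hc]
  have hsup : finrank F (K ⊔ F ∙ w₀ : Submodule F (Fin 6 → F)) ≤ 4 := by
    have := Submodule.finrank_add_le_finrank_add_finrank K (F ∙ w₀)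
    rw [finrank_span_singleton (ne_of_apply_ne (tail345 F) (by simpa using hw₀K))] at this
    omega
  by_contra! h
  have hKW : K ≤ W := le_sup_left.trans (Submodule.eq_of_le_of_finrank_le hle (by omega)).ge
  exact hw₀K (le_ker_tail345_of_ker_le hW hKW hw₀)

end Trivector

/-- Over any field, for the alternating trilinear form on `F⁶` with trivector
`t = f₁₅₆ + f₂₄₆ + f₃₄₅`, no subspace of dimension greater than 3 is totally
singular. (0-based indices.) -/
theorem stmt_15 (F : Type*) [Field F]
    (T : AlternatingMap F (Fin 6 → F) F (Fin 3))
    (hT : ∀ i j k : Fin 6, i < j → j < k →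
      T ![Pi.single i 1, Pi.single j 1, Pi.single k 1] =
        if ((i : ℕ), (j : ℕ), (k : ℕ)) ∈
            [((0:ℕ), (4:ℕ), (5:ℕ)), (1, 3, 5), (2, 3, 4)] then 1 else 0) :
    ∀ W : Submodule F (Fin 6 → F),
      (∀ a ∈ W, ∀ b ∈ W, ∀ x, T ![a, b, x] = 0) → Module.finrank F W ≤ 3 := by
  intro W hW
  rw [eq_trivectorForm T hT] at hW
  exact finrank_le_three_of_isTotallySingular hW
end

section
/- Let F be any field and let T be the alternating trilinear form on V = F^{10} with trivector t = f_{1,7,10} + f_{2,8,10} + f_{3,9,10} + f_{4,8,9} + f_{5,7,9} + f_{6,7,8}. Then T is nondegenerate and the 6-dimensional subspace span{e₁,…,e₆} is totally T-singular. -/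
/-!
An alternating trilinear form is determined by its values on increasing triples of basis
vectors: on any other triple it is obtained by sorting, with the sign of the sorting permutation
(`alternatingExtend`). For the trivector `t` one checks by a finite computation that every
coordinate functional `a ↦ aᵢ` is a contraction `T(·, e_j, e_k)`, so the radical is zero, and
that `T(e_c, e_d, ·) = 0` for `c, d ≤ 6`, since no monomial of `t` has two indices in
`{1, …, 6}`; bilinearity extends the latter to the span of `e₁, …, e₆`.
-/

open Matrix

def alternatingExtend {ι G : Type*} [LinearOrder ι] [Neg G] [Zero G]
    (c : ι → ι → ι → G) (i j k : ι) : G :=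
  if i < j ∧ j < k then c i j k
  else if i < k ∧ k < j then -c i k j
  else if j < i ∧ i < k then -c j i k
  else if j < k ∧ k < i then c j k i
  else if k < i ∧ i < j then c k i j
  else if k < j ∧ j < i then -c k j i
  else 0

section alternatingExtend

variable {ι G H : Type*} [LinearOrder ι]

theorem eq_alternatingExtend [AddGroup G] {f : ι → ι → ι → G}
    (swap₀₁ : ∀ i j k, f j i k = -f i j k) (swap₁₂ : ∀ i j k, f i k j = -f i j k)
    (diag₀₁ : ∀ i k, f i i k = 0) (i j k : ι) :
    f i j k = alternatingExtend f i j k := by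
  unfold alternatingExtend
  split_ifs <;> grind

theorem alternatingExtend_congr [Neg G] [Zero G] {c c' : ι → ι → ι → G}
    (h : ∀ i j k, i < j → j < k → c i j k = c' i j k) (i j k : ι) :
    alternatingExtend c i j k = alternatingExtend c' i j k := by
  unfold alternatingExtend
  split_ifs <;> simp_all

theorem map_alternatingExtend {Φ : Type*} [AddGroup G] [AddGroup H] [FunLike Φ G H]
    [AddMonoidHomClass Φ G H] (φ : Φ) (c : ι → ι → ι → G) (i j k : ι) :
    φ (alternatingExtend c i j k) = alternatingExtend (fun i j k => φ (c i j k)) i j k := by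
  unfold alternatingExtend
  split_ifs <;> simp

end alternatingExtend

namespace AlternatingMap

variable {R M N : Type*} [CommRing R] [AddCommGroup M] [Module R M] [AddCommGroup N] [Module R N]

theorem apply_swap₀₁ (T : M [⋀^Fin 3]→ₗ[R] N) (x y z : M) :
    T ![y, x, z] = -T ![x, y, z] := by
  convert T.map_swap ![x, y, z] (i := 0) (j := 1) (by decide) using 2
  ext t; fin_cases t <;> rfl

theorem apply_swap₁₂ (T : M [⋀^Fin 3]→ₗ[R] N) (x y z : M) :
    T ![x, z, y] = -T ![x, y, z] := by
  convert T.map_swap ![x, y, z] (i := 1) (j := 2) (by decide) using 2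
  ext t; fin_cases t <;> rfl

theorem apply_rotate (T : M [⋀^Fin 3]→ₗ[R] N) (x y z : M) : T ![z, x, y] = T ![x, y, z] := by
  rw [apply_swap₀₁, apply_swap₁₂, neg_neg]

theorem apply_family_eq_alternatingExtend {ι : Type*} [LinearOrder ι]
    (T : M [⋀^Fin 3]→ₗ[R] N) (v : ι → M) {c : ι → ι → ι → N}
    (hc : ∀ i j k, i < j → j < k → T ![v i, v j, v k] = c i j k) (i j k : ι) :
    T ![v i, v j, v k] = alternatingExtend c i j k := by
  rw [eq_alternatingExtend (f := fun i j k => T ![v i, v j, v k])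
    (fun _ _ _ => T.apply_swap₀₁ _ _ _) (fun _ _ _ => T.apply_swap₁₂ _ _ _)
    (fun _ _ => T.map_eq_zero_of_eq _ (i := 0) (j := 1) rfl (by decide))]
  exact alternatingExtend_congr hc i j k

theorem apply_vecCons_eq_sum {ι : Type*} [Fintype ι] [DecidableEq ι] {n : ℕ}
    (T : (ι → R) [⋀^Fin (n + 1)]→ₗ[R] N) (a : ι → R) (v : Fin n → ι → R) :
    T (vecCons a v) = ∑ i, a i • T (vecCons (Pi.single i 1) v) := by
  have h := congrArg (· v)
    (map_sum T.toMultilinearMap.curryLeft (fun i => a i • Pi.single i 1) Finset.univ)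
  simp only [_root_.sum_apply, map_smul, _root_.smul_apply, MultilinearMap.curryLeft_apply] at h
  rwa [← pi_eq_sum_univ' a] at h

theorem apply_eq_zero_of_mem_span {n : ℕ} (T : M [⋀^Fin (n + 2)]→ₗ[R] N) {s : Set M}
    (hs : ∀ u ∈ s, ∀ v ∈ s, ∀ w, T (vecCons u (vecCons v w)) = 0) {a b : M}
    (ha : a ∈ Submodule.span R s) (hb : b ∈ Submodule.span R s) (w : Fin n → M) :
    T (vecCons a (vecCons b w)) = 0 := by
  let B := curryLeftLinearMap ∘ₗ T.curryLeft
  have hB : ∀ u v w, B u v w = T (vecCons u (vecCons v w)) := fun _ _ _ => rfl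
  have hspan : Submodule.span R (Set.image2 (fun u v => B u v) s s) = ⊥ := by
    refine Submodule.span_eq_bot.mpr ?_
    rintro _ ⟨u, hu, v, hv, rfl⟩
    ext w
    simp [hB, hs u hu v hv]
  have hab := Submodule.apply_mem_map₂ B ha hb
  rw [Submodule.map₂_span_span, hspan, Submodule.mem_bot] at hab
  rw [← hB, hab, zero_apply]

end AlternatingMap

/-- The coefficients of `t` on increasing index triples, with indices shifted to start at `0`. -/
def trivectorCoeff (i j k : Fin 10) : ℤ :=
  if ((i : ℕ), (j : ℕ), (k : ℕ)) ∈
      [((0:ℕ), (6:ℕ), (9:ℕ)), (1, 7, 9), (2, 8, 9), (3, 7, 8), (4, 6, 8), (5, 6, 7)]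
  then 1 else 0

theorem alternatingExtend_trivectorCoeff_of_lt_six :
    ∀ i j k : Fin 10, i < 6 → j < 6 → alternatingExtend trivectorCoeff k i j = 0 := by
  decide

theorem exists_alternatingExtend_trivectorCoeff_eq_ite :
    ∀ i : Fin 10, ∃ j k : Fin 10,
      ∀ i', alternatingExtend trivectorCoeff i' j k = if i' = i then 1 else 0 := by
  decide

section trivectorCoeff

variable {R : Type*} [CommRing R] {T : (Fin 10 → R) [⋀^Fin 3]→ₗ[R] R}
  (hT : ∀ i j k, T ![Pi.single i 1, Pi.single j 1, Pi.single k 1] =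
    ((alternatingExtend trivectorCoeff i j k : ℤ) : R))
include hT

theorem exists_apply_single_single_eq_apply (i : Fin 10) :
    ∃ j k : Fin 10, ∀ a, T ![a, Pi.single j 1, Pi.single k 1] = a i := by
  obtain ⟨j, k, hjk⟩ := exists_alternatingExtend_trivectorCoeff_eq_ite i
  exact ⟨j, k, fun a => by simp [T.apply_vecCons_eq_sum a, hT, hjk]⟩

theorem apply_single_single_eq_zero_of_lt_six {c d : Fin 10} (hc : c < 6) (hd : d < 6)
    (y : Fin 10 → R) : T ![Pi.single c 1, Pi.single d 1, y] = 0 := by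
  rw [← T.apply_rotate, T.apply_vecCons_eq_sum]
  simp [hT, alternatingExtend_trivectorCoeff_of_lt_six c d _ hc hd]

end trivectorCoeff

/-- Over any field, the alternating trilinear form on `F¹⁰` with trivector
`t = f_{1,7,10} + f_{2,8,10} + f_{3,9,10} + f_{4,8,9} + f_{5,7,9} + f_{6,7,8}`
is nondegenerate, and the 6-space `span{e₁,…,e₆}` is totally singular.
(0-based indices.) -/
theorem stmt_16 (F : Type*) [Field F]
    (T : AlternatingMap F (Fin 10 → F) F (Fin 3))
    (hT : ∀ i j k : Fin 10, i < j → j < k →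
      T ![Pi.single i 1, Pi.single j 1, Pi.single k 1] =
        if ((i : ℕ), (j : ℕ), (k : ℕ)) ∈
            [((0:ℕ), (6:ℕ), (9:ℕ)), (1, 7, 9), (2, 8, 9),
              (3, 7, 8), (4, 6, 8), (5, 6, 7)] then 1 else 0) :
    (∀ a : Fin 10 → F, (∀ x y, T ![a, x, y] = 0) → a = 0) ∧
    (∀ a ∈ Submodule.span F {Pi.single (0 : Fin 10) (1 : F), Pi.single 1 1,
        Pi.single 2 1, Pi.single 3 1, Pi.single 4 1, Pi.single 5 1},
      ∀ b ∈ Submodule.span F {Pi.single (0 : Fin 10) (1 : F), Pi.single 1 1,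
        Pi.single 2 1, Pi.single 3 1, Pi.single 4 1, Pi.single 5 1},
        ∀ x, T ![a, b, x] = 0) := by
  have hbasis (i j k : Fin 10) : T ![Pi.single i 1, Pi.single j 1, Pi.single k 1] =
      ((alternatingExtend trivectorCoeff i j k : ℤ) : F) := by
    rw [← eq_intCast (Int.castRingHom F), map_alternatingExtend]
    refine T.apply_family_eq_alternatingExtend (fun i => Pi.single i 1)
      (fun i j k hij hjk => ?_) i j k
    rw [hT i j k hij hjk, trivectorCoeff]
    split_ifs <;> simp
  refine ⟨fun a ha => funext fun i => ?_, fun a ha b hb x => ?_⟩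
  · obtain ⟨j, k, hjk⟩ := exists_apply_single_single_eq_apply hbasis i
    rw [← hjk a, ha, Pi.zero_apply]
  · refine T.apply_eq_zero_of_mem_span (fun u hu v hv y => ?_) ha hb ![x]
    simp only [Set.mem_insert_iff, Set.mem_singleton_iff] at hu hv
    rw [show y = ![y 0] by ext i; fin_cases i; rfl]
    rcases hu with rfl | rfl | rfl | rfl | rfl | rfl <;>
      rcases hv with rfl | rfl | rfl | rfl | rfl | rfl <;>
      exact apply_single_single_eq_zero_of_lt_six hbasis (by decide) (by decide) _
end

section
/- Let q = 2^h, let V = GF(q)^6, and let T be the alternating trilinear form with trivector t = f_{123} + f_{156} − f_{246} + f_{345} (i.e., the form of Theorem on odd q with μ = 1, noting signs are irrelevant in characteristic 2). Then the set of T-singular lines is not a spread: every line contained in the 3-dimensional subspace span{e₁+e₄, e₂+e₅, e₃+e₆} is T-singular, so some points lie on more than one T-singular line. -/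
set_option linter.unusedSectionVars false

section Aux
variable {F : Type*} [Field F] (T : AlternatingMap F (Fin 6 → F) F (Fin 3))

lemma upd0 (a b x y : Fin 6 → F) : Function.update ![a, b, x] 0 y = ![y, b, x] := by
  ext i j; fin_cases i <;> simp [Function.update]

lemma upd1 (a b x y : Fin 6 → F) : Function.update ![a, b, x] 1 y = ![a, y, x] := by
  ext i j; fin_cases i <;> simp [Function.update]

lemma upd2 (a b x y : Fin 6 → F) : Function.update ![a, b, x] 2 y = ![a, b, y] := by
  ext i j; fin_cases i <;> simp [Function.update]

lemma Tadd0 (a a' b x : Fin 6 → F) :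
    T ![a + a', b, x] = T ![a, b, x] + T ![a', b, x] := by
  have := T.map_update_add ![a, b, x] 0 a a'
  simpa [upd0] using this

lemma Tadd1 (a b b' x : Fin 6 → F) :
    T ![a, b + b', x] = T ![a, b, x] + T ![a, b', x] := by
  have := T.map_update_add ![a, b, x] 1 b b'
  simpa [upd1] using this

lemma Tadd2 (a b x x' : Fin 6 → F) :
    T ![a, b, x + x'] = T ![a, b, x] + T ![a, b, x'] := by
  have := T.map_update_add ![a, b, x] 2 x x'
  simpa [upd2] using this

lemma Tsmul0 (a b x : Fin 6 → F) (r : F) :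
    T ![r • a, b, x] = r * T ![a, b, x] := by
  have := T.map_update_smul ![a, b, x] 0 r a
  simpa [upd0] using this

lemma Tsmul1 (a b x : Fin 6 → F) (r : F) :
    T ![a, r • b, x] = r * T ![a, b, x] := by
  have := T.map_update_smul ![a, b, x] 1 r b
  simpa [upd1] using this

lemma Tsmul2 (a b x : Fin 6 → F) (r : F) :
    T ![a, b, r • x] = r * T ![a, b, x] := by
  have := T.map_update_smul ![a, b, x] 2 r x
  simpa [upd2] using this

lemma Tswap01 (a b x : Fin 6 → F) : T ![b, a, x] = - T ![a, b, x] := by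
  have := T.map_swap (v := ![a, b, x]) (i := 0) (j := 1) (by decide)
  rw [← this]; congr 1; ext i j; fin_cases i <;> simp [Equiv.swap_apply_def]

lemma Tswap12 (a b x : Fin 6 → F) : T ![a, x, b] = - T ![a, b, x] := by
  have := T.map_swap (v := ![a, b, x]) (i := 1) (j := 2) (by decide)
  rw [← this]; congr 1; ext i j; fin_cases i <;> simp [Equiv.swap_apply_def]

lemma Tdiag01 (a x : Fin 6 → F) : T ![a, a, x] = 0 :=
  T.map_eq_zero_of_eq ![a, a, x] (i := 0) (j := 1) rfl (by decide)

lemma Tdiag02 (a x : Fin 6 → F) : T ![a, x, a] = 0 :=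
  T.map_eq_zero_of_eq ![a, x, a] (i := 0) (j := 2) rfl (by decide)

lemma Tdiag12 (a x : Fin 6 → F) : T ![x, a, a] = 0 :=
  T.map_eq_zero_of_eq ![x, a, a] (i := 1) (j := 2) rfl (by decide)

def spreadSS : Finset (Finset (Fin 6)) := {{0,1,2},{0,4,5},{1,3,5},{2,3,4}}

def cval (F : Type*) [Field F] (i j k : Fin 6) : F :=
  if ({i, j, k} : Finset (Fin 6)) ∈ spreadSS then 1 else 0

lemma cval_comm01 (i j k : Fin 6) : cval F i j k = cval F j i k := by
  unfold cval; rw [Finset.insert_comm]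

lemma cval_comm12 (i j k : Fin 6) : cval F i j k = cval F i k j := by
  unfold cval; rw [Finset.pair_comm]

lemma key (hT : ∀ i j k : Fin 6, i < j → j < k →
      T ![Pi.single i 1, Pi.single j 1, Pi.single k 1] =
        if ((i : ℕ), (j : ℕ), (k : ℕ)) ∈
            [((0:ℕ), (1:ℕ), (2:ℕ)), (0, 4, 5), (1, 3, 5), (2, 3, 4)]
          then 1 else 0)
    (neg : ∀ z : F, -z = z) (i j k : Fin 6) :
    T ![Pi.single i 1, Pi.single j 1, Pi.single k 1] = cval F i j k := by
  have sorted : ∀ i j k : Fin 6, i < j → j < k →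
      T ![Pi.single i 1, Pi.single j 1, Pi.single k 1] = cval F i j k := by
    intro i j k hij hjk
    rw [hT i j k hij hjk]
    have equiv : (((i : ℕ), (j : ℕ), (k : ℕ)) ∈
        [((0:ℕ), (1:ℕ), (2:ℕ)), (0, 4, 5), (1, 3, 5), (2, 3, 4)]) ↔
        ({i, j, k} : Finset (Fin 6)) ∈ spreadSS := by
      revert hjk; revert hij; revert i j k; decide
    unfold cval
    exact if_congr equiv rfl rfl
  have cdiag01 : ∀ i k : Fin 6, cval F i i k = 0 := by
    intro i k; unfold cval; rw [if_neg]; revert k; revert i; decide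
  have cdiag02 : ∀ i k : Fin 6, cval F i k i = 0 := by
    intro i k; unfold cval; rw [if_neg]; revert k; revert i; decide
  have cdiag12 : ∀ i k : Fin 6, cval F k i i = 0 := by
    intro i k; unfold cval; rw [if_neg]; revert k; revert i; decide
  rcases lt_trichotomy i j with hij | rfl | hij
  · rcases lt_trichotomy j k with hjk | rfl | hjk
    · exact sorted i j k hij hjk
    · rw [Tdiag12, cdiag12]
    · rcases lt_trichotomy i k with hik | rfl | hik
      · rw [Tswap12, neg, sorted i k j hik hjk, cval_comm12]
      · rw [Tdiag02, cdiag02]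
      · rw [Tswap12, neg, Tswap01, neg, sorted k i j hik hij,
          cval_comm01, cval_comm12]
  · rw [Tdiag01, cdiag01]
  · rcases lt_trichotomy i k with hik | rfl | hik
    · rw [Tswap01, neg, sorted j i k hij hik, cval_comm01]
    · rw [Tdiag02, cdiag02]
    · rcases lt_trichotomy j k with hjk | rfl | hjk
      · rw [Tswap01, neg, Tswap12, neg, sorted j k i hjk hik,
          cval_comm12, cval_comm01]
      · rw [Tdiag12, cdiag12]
      · rw [Tswap01, neg, Tswap12, neg, Tswap01, neg, sorted k j i hjk hij,
          cval_comm01, cval_comm12, cval_comm01]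

end Aux


/-- Over `GF(2^h)`, for the form on `F⁶` with trivector
`t = f₁₂₃ + f₁₅₆ + f₂₄₆ + f₃₄₅` (signs irrelevant in characteristic 2), every
line contained in the plane `span{e₁+e₄, e₂+e₅, e₃+e₆}` is `T`-singular, and
hence the set of `T`-singular lines is not a spread. (0-based indices.) -/
theorem stmt_19 (h : ℕ) (hpos : 0 < h) (F : Type*) [Field F] [Fintype F]
    (hcard : Fintype.card F = 2 ^ h)
    (T : AlternatingMap F (Fin 6 → F) F (Fin 3))
    (hT : ∀ i j k : Fin 6, i < j → j < k →
      T ![Pi.single i 1, Pi.single j 1, Pi.single k 1] =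
        if ((i : ℕ), (j : ℕ), (k : ℕ)) ∈
            [((0:ℕ), (1:ℕ), (2:ℕ)), (0, 4, 5), (1, 3, 5), (2, 3, 4)]
          then 1 else 0) :
    (∀ a ∈ Submodule.span F {Pi.single (0 : Fin 6) (1 : F) + Pi.single 3 1,
        Pi.single 1 1 + Pi.single 4 1, Pi.single 2 1 + Pi.single 5 1},
      ∀ b ∈ Submodule.span F {Pi.single (0 : Fin 6) (1 : F) + Pi.single 3 1,
        Pi.single 1 1 + Pi.single 4 1, Pi.single 2 1 + Pi.single 5 1},
        ∀ x, T ![a, b, x] = 0) ∧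
    ¬ (∀ v : Fin 6 → F, v ≠ 0 → ∃! W : Submodule F (Fin 6 → F),
        (Module.finrank F W = 2 ∧ ∀ a ∈ W, ∀ b ∈ W, ∀ x, T ![a, b, x] = 0) ∧
          v ∈ W) := by
  -- characteristic 2
  have hcast : ((2 ^ h : ℕ) : F) = 0 := by
    rw [← hcard]; exact FiniteField.cast_card_eq_zero F
  have two : (2 : F) = 0 := by
    push_cast at hcast
    exact pow_eq_zero_iff hpos.ne'  |>.mp hcast
  have neg : ∀ z : F, -z = z := fun z => by
    have : z + z = 0 := by linear_combination z * two
    exact neg_eq_of_add_eq_zero_left this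
  -- abbreviations
  set u0 : Fin 6 → F := Pi.single (0 : Fin 6) (1 : F) + Pi.single 3 1 with hu0
  set u1 : Fin 6 → F := Pi.single (1 : Fin 6) (1 : F) + Pi.single 4 1 with hu1
  set u2 : Fin 6 → F := Pi.single (2 : Fin 6) (1 : F) + Pi.single 5 1 with hu2
  set S : Set (Fin 6 → F) := {u0, u1, u2} with hS
  -- reduce "for all x" to basis vectors
  have hbasis : ∀ a b : Fin 6 → F, (∀ k : Fin 6, T ![a, b, Pi.single k 1] = 0) →
      ∀ x, T ![a, b, x] = 0 := by
    intro a b hk x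
    let L : (Fin 6 → F) →ₗ[F] F :=
      { toFun := fun y => T ![a, b, y]
        map_add' := Tadd2 T a b
        map_smul' := fun r y => by simpa using Tsmul2 T a b y r }
    have hL : L = 0 := by
      apply (Pi.basisFun F (Fin 6)).ext
      intro k
      simpa [L, Pi.basisFun_apply] using hk k
    simpa [L] using DFunLike.congr_fun hL x
  have hpair : ∀ a1 a2 b1 b2 : Fin 6,
      (∀ k : Fin 6, cval F a1 b1 k + cval F a1 b2 k + cval F a2 b1 k + cval F a2 b2 k = 0) →
      ∀ x, T ![Pi.single a1 1 + Pi.single a2 1, Pi.single b1 1 + Pi.single b2 1, x] = 0 := by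
    intro a1 a2 b1 b2 hc
    apply hbasis
    intro k
    rw [Tadd0, Tadd1, Tadd1, key T hT neg, key T hT neg, key T hT neg, key T hT neg]
    linear_combination hc k
  have hsymm : ∀ a b : Fin 6 → F, (∀ x, T ![a, b, x] = 0) → ∀ x, T ![b, a, x] = 0 := by
    intro a b hab x
    rw [Tswap01, hab, neg_zero]
  have h01 : ∀ x, T ![u0, u1, x] = 0 := by
    apply hpair
    intro k
    fin_cases k <;>
      simp (config := { decide := true }) [cval, spreadSS, one_add_one_eq_two, two]
  have h02 : ∀ x, T ![u0, u2, x] = 0 := by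
    apply hpair
    intro k
    fin_cases k <;>
      simp (config := { decide := true }) [cval, spreadSS, one_add_one_eq_two, two]
  have h12 : ∀ x, T ![u1, u2, x] = 0 := by
    apply hpair
    intro k
    fin_cases k <;>
      simp (config := { decide := true }) [cval, spreadSS, one_add_one_eq_two, two]
  have base : ∀ a ∈ S, ∀ b ∈ S, ∀ x, T ![a, b, x] = 0 := by
    intro a ha b hb
    rcases ha with rfl | rfl | rfl <;> rcases hb with rfl | rfl | rfl
    · exact fun x => Tdiag01 T _ x
    · exact h01
    · exact h02
    · exact hsymm _ _ h01
    · exact fun x => Tdiag01 T _ x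
    · exact h12
    · exact hsymm _ _ h02
    · exact hsymm _ _ h12
    · exact fun x => Tdiag01 T _ x
  have hplane : ∀ a ∈ Submodule.span F S, ∀ b ∈ Submodule.span F S,
      ∀ x, T ![a, b, x] = 0 := by
    intro a ha b hb
    induction ha, hb using Submodule.span_induction₂ with
    | mem_mem a b ha hb => exact base a ha b hb
    | zero_left b hb => exact fun x => T.map_coord_zero (m := ![0, b, x]) 0 rfl
    | zero_right a ha => exact fun x => T.map_coord_zero (m := ![a, 0, x]) 1 rfl
    | add_left a a' b _ _ _ h1 h2 => exact fun x => by rw [Tadd0, h1, h2, add_zero]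
    | add_right a b b' _ _ _ h1 h2 => exact fun x => by rw [Tadd1, h1, h2, add_zero]
    | smul_left r a b _ _ h1 => exact fun x => by rw [Tsmul0, h1, mul_zero]
    | smul_right r a b _ _ h1 => exact fun x => by rw [Tsmul1, h1, mul_zero]
  refine ⟨hplane, ?_⟩
  intro hspread
  have hu0ne : u0 ≠ 0 := by
    intro hzero
    have := congrFun hzero 0
    simp [hu0, Pi.single_apply] at this
  obtain ⟨W, -, hWuniq⟩ := hspread u0 hu0ne
  -- two distinct singular lines through u0
  have hsub : ∀ v w : Fin 6 → F, v ∈ S → w ∈ S →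
      (Module.finrank F (Submodule.span F {v, w}) = 2 ∧
        ∀ a ∈ Submodule.span F {v, w}, ∀ b ∈ Submodule.span F {v, w},
          ∀ x, T ![a, b, x] = 0) ∧ u0 ∈ Submodule.span F {v, w} → True := fun _ _ _ _ _ => trivial
  have hle : ∀ v w : Fin 6 → F, v ∈ S → w ∈ S →
      Submodule.span F {v, w} ≤ Submodule.span F S := by
    intro v w hv hw
    apply Submodule.span_le.mpr
    intro y hy
    rcases hy with rfl | rfl
    · exact Submodule.subset_span hv
    · exact Submodule.subset_span hw
  have hprop : ∀ v w : Fin 6 → F, v ∈ S → w ∈ S → LinearIndependent F ![v, w] →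
      (Module.finrank F (Submodule.span F ({v, w} : Set (Fin 6 → F))) = 2 ∧
        ∀ a ∈ Submodule.span F ({v, w} : Set (Fin 6 → F)),
          ∀ b ∈ Submodule.span F ({v, w} : Set (Fin 6 → F)), ∀ x, T ![a, b, x] = 0) := by
    intro v w hv hw hli
    constructor
    · have : Submodule.span F ({v, w} : Set (Fin 6 → F)) =
          Submodule.span F (Set.range ![v, w]) := by
        rw [Matrix.range_cons_cons_empty]
      rw [this, finrank_span_eq_card hli, Fintype.card_fin]
    · intro a ha b hb
      exact hplane a (hle v w hv hw ha) b (hle v w hv hw hb)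
  have hli01 : LinearIndependent F ![u0, u1] := by
    rw [LinearIndependent.pair_iff]
    intro s t hst
    constructor
    · have := congrFun hst 0
      simpa [hu0, hu1, Pi.single_apply] using this
    · have := congrFun hst 1
      simpa [hu0, hu1, Pi.single_apply] using this
  have hli02 : LinearIndependent F ![u0, u2] := by
    rw [LinearIndependent.pair_iff]
    intro s t hst
    constructor
    · have := congrFun hst 0
      simpa [hu0, hu2, Pi.single_apply] using this
    · have := congrFun hst 2
      simpa [hu0, hu2, Pi.single_apply] using this
  have hmem0 : u0 ∈ S := by simp [hS]
  have hmem1 : u1 ∈ S := by simp [hS]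
  have hmem2 : u2 ∈ S := by simp [hS]
  have hW1 := hWuniq (Submodule.span F ({u0, u1} : Set (Fin 6 → F)))
    ⟨hprop u0 u1 hmem0 hmem1 hli01, Submodule.subset_span (by simp)⟩
  have hW2 := hWuniq (Submodule.span F ({u0, u2} : Set (Fin 6 → F)))
    ⟨hprop u0 u2 hmem0 hmem2 hli02, Submodule.subset_span (by simp)⟩
  have hW12 : Submodule.span F ({u0, u2} : Set (Fin 6 → F)) =
      Submodule.span F ({u0, u1} : Set (Fin 6 → F)) := by rw [hW1, hW2]
  have hu2mem : u2 ∈ Submodule.span F ({u0, u1} : Set (Fin 6 → F)) := by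
    rw [← hW12]
    exact Submodule.subset_span (by simp)
  rw [Submodule.mem_span_pair] at hu2mem
  obtain ⟨a, b, hab⟩ := hu2mem
  have := congrFun hab 2
  simp [hu0, hu1, hu2, Pi.single_apply] at this
end
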